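/- Let S = [[A,B],[C,D]] ∈ SP₂ₙ(ℂ) satisfy i(S*JS - J) ≥ 0, and Z ∈ 𝒮ₙ. Then CZ+D is invertible and Φ_S(Z) = (AZ+B)(CZ+D)⁻¹ ∈ 𝒮ₙ (i.e., it is symmetric with positive definite imaginary part). -/

import Mathlib

open Matrix
open scoped ComplexOrder

noncomputable section

/-- The standard symplectic form matrix over ℂ. -/
def J (n : ℕ) : Matrix (Fin n ⊕ Fin n) (Fin n ⊕ Fin n) ℂ :=
  Matrix.fromBlocks 0 1 (-1) 0

/-- The standard symplectic form matrix over ℝ. -/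
def JR (n : ℕ) : Matrix (Fin n ⊕ Fin n) (Fin n ⊕ Fin n) ℝ :=
  Matrix.fromBlocks 0 1 (-1) 0

/-- Membership in the Siegel upper half space: symmetric with positive definite
imaginary part. -/
def InSiegel {n : ℕ} (Z : Matrix (Fin n) (Fin n) ℂ) : Prop :=
  Zᵀ = Z ∧ (Z.map Complex.im).PosDef

/-- Membership in the lower Siegel space: symmetric with negative definite
imaginary part. -/
def InSiegelBar {n : ℕ} (Z : Matrix (Fin n) (Fin n) ℂ) : Prop :=
  Zᵀ = Z ∧ (-(Z.map Complex.im)).PosDef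

/-- The generalized linear fractional transformation Φ. -/
def Phi {n : ℕ} (A B C D Z : Matrix (Fin n) (Fin n) ℂ) : Matrix (Fin n) (Fin n) ℂ :=
  (A * Z + B) * (C * Z + D)⁻¹

/-- The ℓ²-operator norm of a complex matrix. -/
def opNorm {n : ℕ} (M : Matrix (Fin n) (Fin n) ℂ) : ℝ :=
  ‖Matrix.toEuclideanCLM (𝕜 := ℂ) (n := Fin n) M‖


/-!
Put `W = [Z; 1]`, so that `S * W = [P; Q]` with `P = A * Z + B` and `Q = C * Z + D`. Since `Z` is
symmetric, `Wᵀ J W = 0`, and the symplectic condition gives `Pᵀ Q = Qᵀ P`. Likewise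
`i (Pᴴ Q - Qᴴ P) = i (Zᴴ - Z) + Wᴴ (i (Sᴴ J S - J)) W`, a positive definite plus a positive
semidefinite matrix. Positivity forces `Q` to be injective (`Q v = 0` kills the form at `v`),
and then `Φ = P Q⁻¹` is symmetric with `i (Φᴴ - Φ) = Q⁻¹ᴴ (i (Pᴴ Q - Qᴴ P)) Q⁻¹ > 0`.
For symmetric `Z`, `i (Zᴴ - Z) = 2 Im Z`.
-/

section RealMatrices

variable {ι : Type*} [Fintype ι]

lemma Matrix.re_star_dotProduct_map_ofReal_mulVec (R : Matrix ι ι ℝ) (x : ι → ℂ) :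
    (star x ⬝ᵥ R.map Complex.ofReal *ᵥ x).re =
      (fun i ↦ (x i).re) ⬝ᵥ R *ᵥ (fun i ↦ (x i).re) +
        (fun i ↦ (x i).im) ⬝ᵥ R *ᵥ (fun i ↦ (x i).im) := by
  simp only [dotProduct, mulVec, Finset.mul_sum, Complex.re_sum, ← Finset.sum_add_distrib]
  refine Finset.sum_congr rfl fun i _ ↦ Finset.sum_congr rfl fun j _ ↦ ?_
  simp only [Pi.star_apply, Complex.star_def, map_apply, Complex.mul_re, Complex.mul_im,
    Complex.conj_re, Complex.conj_im, Complex.ofReal_re, Complex.ofReal_im]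
  ring

lemma Matrix.posDef_map_ofReal_iff {R : Matrix ι ι ℝ} :
    (R.map Complex.ofReal).PosDef ↔ R.PosDef := by
  have hherm : (R.map Complex.ofReal).IsHermitian ↔ R.IsHermitian := by
    rw [IsHermitian, ← conjTranspose_map _ fun r ↦ by simp,
      (map_injective Complex.ofReal_injective).eq_iff, IsHermitian]
  refine ⟨fun h ↦ .of_dotProduct_mulVec_pos (hherm.1 h.1) fun u hu ↦ ?_,
    fun h ↦ .of_dotProduct_mulVec_pos (hherm.2 h.1) fun x hx ↦ ?_⟩
  · have hx : (fun i ↦ (u i : ℂ)) ≠ 0 := fun h0 ↦ hu (funext fun i ↦ by simpa using congrFun h0 i)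
    have := (Complex.pos_iff.1 (h.dotProduct_mulVec_pos hx)).1
    simpa [re_star_dotProduct_map_ofReal_mulVec] using this
  · have hre : 0 < (star x ⬝ᵥ R.map Complex.ofReal *ᵥ x).re := by
      rw [re_star_dotProduct_map_ofReal_mulVec]
      by_cases hu : (fun i ↦ (x i).re) = 0
      · have hv : (fun i ↦ (x i).im) ≠ 0 := fun hv ↦
          hx (funext fun i ↦ Complex.ext (congrFun hu i) (congrFun hv i))
        simpa [hu] using h.dotProduct_mulVec_pos hv
      · exact add_pos_of_pos_of_nonneg (by simpa using h.dotProduct_mulVec_pos hu)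
          (by simpa using h.posSemidef.dotProduct_mulVec_nonneg _)
    exact Complex.pos_iff.2 ⟨hre, ((hherm.2 h.1).im_star_dotProduct_mulVec_self x).symm⟩

end RealMatrices

lemma Matrix.I_smul_conjTranspose_sub_self {ι : Type*} {Z : Matrix ι ι ℂ} (hZ : Zᵀ = Z) :
    Complex.I • (Zᴴ - Z) = (2 : ℝ) • (Z.map Complex.im).map Complex.ofReal := by
  ext i j
  have hji : Z j i = Z i j := congrFun (congrFun hZ i) j
  apply Complex.ext <;> simp [hji, two_mul]

lemma Matrix.posDef_I_smul_conjTranspose_sub_self_iff {ι : Type*} [Fintype ι] {Z : Matrix ι ι ℂ}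
    (hZ : Zᵀ = Z) : (Complex.I • (Zᴴ - Z)).PosDef ↔ (Z.map Complex.im).PosDef := by
  rw [I_smul_conjTranspose_sub_self hZ, ← posDef_map_ofReal_iff]
  exact ⟨fun h ↦ by simpa using h.smul (inv_pos.2 (two_pos : (0 : ℝ) < 2)),
    fun h ↦ h.smul two_pos⟩

lemma inSiegel_iff {n : ℕ} {Z : Matrix (Fin n) (Fin n) ℂ} :
    InSiegel Z ↔ Zᵀ = Z ∧ (Complex.I • (Zᴴ - Z)).PosDef :=
  and_congr_right posDef_I_smul_conjTranspose_sub_self_iff |>.symm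

section SymplecticForm

variable {n : ℕ} {m : Type*}

lemma transpose_fromRows_mul_J_mul_fromRows (X Y : Matrix (Fin n) m ℂ) :
    (fromRows X Y)ᵀ * _root_.J n * fromRows X Y = Xᵀ * Y - Yᵀ * X := by
  rw [Matrix.mul_assoc, _root_.J, fromBlocks_mul_fromRows, transpose_fromRows,
    fromCols_mul_fromRows]
  simp [sub_eq_add_neg]

lemma conjTranspose_fromRows_mul_J_mul_fromRows (X Y : Matrix (Fin n) m ℂ) :
    (fromRows X Y)ᴴ * _root_.J n * fromRows X Y = Xᴴ * Y - Yᴴ * X := by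
  rw [Matrix.mul_assoc, _root_.J, fromBlocks_mul_fromRows,
    conjTranspose_fromRows_eq_fromCols_conjTranspose, fromCols_mul_fromRows]
  simp [sub_eq_add_neg]

end SymplecticForm

section Graph

variable {ι : Type*} [Fintype ι] [DecidableEq ι]

lemma Matrix.isUnit_of_posDef_I_smul_conjTranspose_mul_sub {P Q : Matrix ι ι ℂ}
    (hPQ : (Complex.I • (Pᴴ * Q - Qᴴ * P)).PosDef) : IsUnit Q := by
  rw [isUnit_iff_isUnit_det, isUnit_iff_ne_zero, ne_eq, ← exists_mulVec_eq_zero_iff]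
  rintro ⟨v, hv0, hv⟩
  have hpos := hPQ.dotProduct_mulVec_pos hv0
  rw [smul_mulVec, sub_mulVec, ← mulVec_mulVec, ← mulVec_mulVec, hv, mulVec_zero, zero_sub,
    dotProduct_smul, dotProduct_neg, dotProduct_mulVec, ← star_mulVec, hv] at hpos
  simp at hpos

lemma Matrix.transpose_mul_nonsing_inv_of_transpose_mul_comm {R : Type*} [CommRing R]
    {P Q : Matrix ι ι R} (hPQ : Pᵀ * Q = Qᵀ * P) (hQ : IsUnit Q) :
    (P * Q⁻¹)ᵀ = P * Q⁻¹ := by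
  rw [isUnit_iff_isUnit_det] at hQ
  calc (P * Q⁻¹)ᵀ = Qᵀ⁻¹ * (Pᵀ * Q) * Q⁻¹ := by
        simp [transpose_nonsing_inv, Matrix.mul_assoc, mul_nonsing_inv _ hQ]
    _ = P * Q⁻¹ := by
        rw [hPQ, ← Matrix.mul_assoc, nonsing_inv_mul _ (isUnit_det_transpose _ hQ), Matrix.one_mul]

lemma Matrix.I_smul_conjTranspose_mul_nonsing_inv_sub {P Q : Matrix ι ι ℂ} (hQ : IsUnit Q) :
    Complex.I • ((P * Q⁻¹)ᴴ - P * Q⁻¹) = Q⁻¹ᴴ * (Complex.I • (Pᴴ * Q - Qᴴ * P)) * Q⁻¹ := by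
  rw [isUnit_iff_isUnit_det] at hQ
  rw [Matrix.mul_smul, Matrix.smul_mul, Matrix.mul_sub, Matrix.sub_mul]
  congr 2
  · simp [conjTranspose_mul, Matrix.mul_assoc, mul_nonsing_inv _ hQ]
  · rw [← Matrix.mul_assoc, ← conjTranspose_mul, mul_nonsing_inv _ hQ,
      conjTranspose_one, Matrix.one_mul]

end Graph

theorem isUnit_and_inSiegel_mul_nonsing_inv {n : ℕ} {P Q : Matrix (Fin n) (Fin n) ℂ}
    (hPQ : Pᵀ * Q = Qᵀ * P) (hpos : (Complex.I • (Pᴴ * Q - Qᴴ * P)).PosDef) :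
    IsUnit Q ∧ InSiegel (P * Q⁻¹) := by
  have hQ := isUnit_of_posDef_I_smul_conjTranspose_mul_sub hpos
  refine ⟨hQ, inSiegel_iff.2 ⟨transpose_mul_nonsing_inv_of_transpose_mul_comm hPQ hQ, ?_⟩⟩
  rw [I_smul_conjTranspose_mul_nonsing_inv_sub hQ]
  exact hpos.conjTranspose_mul_mul_same
    (mulVec_injective_iff_isUnit.2 (isUnit_nonsing_inv_iff.2 hQ))

section LinearFractional

variable {n : ℕ} (A B C D Z : Matrix (Fin n) (Fin n) ℂ)

lemma fromBlocks_mul_fromRows_one :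
    fromBlocks A B C D * fromRows Z (1 : Matrix (Fin n) (Fin n) ℂ) =
      fromRows (A * Z + B) (C * Z + D) := by
  simp [fromBlocks_mul_fromRows]

variable {A B C D Z}

lemma transpose_mul_comm_of_transpose_mul_J_mul_eq
    (hS : (fromBlocks A B C D)ᵀ * _root_.J n * fromBlocks A B C D = _root_.J n) (hZ : Zᵀ = Z) :
    (A * Z + B)ᵀ * (C * Z + D) = (C * Z + D)ᵀ * (A * Z + B) := by
  set S := fromBlocks A B C D
  set W := fromRows Z (1 : Matrix (Fin n) (Fin n) ℂ)
  have hSW : S * W = fromRows (A * Z + B) (C * Z + D) := fromBlocks_mul_fromRows_one A B C D Z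
  rw [← sub_eq_zero, ← transpose_fromRows_mul_J_mul_fromRows, ← hSW]
  calc (S * W)ᵀ * _root_.J n * (S * W) = Wᵀ * (Sᵀ * _root_.J n * S) * W := by
        simp only [transpose_mul, Matrix.mul_assoc]
    _ = 0 := by simp [hS, W, transpose_fromRows_mul_J_mul_fromRows, hZ]

lemma posDef_I_smul_conjTranspose_mul_sub_of_posSemidef
    (hM : (Complex.I • ((fromBlocks A B C D)ᴴ * _root_.J n * fromBlocks A B C D -
      _root_.J n)).PosSemidef)
    (hZ : (Complex.I • (Zᴴ - Z)).PosDef) :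
    (Complex.I • ((A * Z + B)ᴴ * (C * Z + D) - (C * Z + D)ᴴ * (A * Z + B))).PosDef := by
  set S := fromBlocks A B C D
  set W := fromRows Z (1 : Matrix (Fin n) (Fin n) ℂ)
  have hSW : S * W = fromRows (A * Z + B) (C * Z + D) := fromBlocks_mul_fromRows_one A B C D Z
  have hform : (A * Z + B)ᴴ * (C * Z + D) - (C * Z + D)ᴴ * (A * Z + B) =
      Wᴴ * (Sᴴ * _root_.J n * S) * W := by
    rw [← conjTranspose_fromRows_mul_J_mul_fromRows, ← hSW]
    simp only [conjTranspose_mul, Matrix.mul_assoc]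
  have hW : Wᴴ * _root_.J n * W = Zᴴ - Z := by
    simp [W, conjTranspose_fromRows_mul_J_mul_fromRows]
  have hsplit : Complex.I • ((A * Z + B)ᴴ * (C * Z + D) - (C * Z + D)ᴴ * (A * Z + B)) =
      Complex.I • (Zᴴ - Z) + Wᴴ * (Complex.I • (Sᴴ * _root_.J n * S - _root_.J n)) * W := by
    rw [Matrix.mul_smul, Matrix.smul_mul, Matrix.mul_sub, Matrix.sub_mul, ← hform, hW, ← smul_add,
      add_sub_cancel]
  rw [hsplit]
  exact hZ.add_posSemidef (hM.conjTranspose_mul_mul_same W)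

end LinearFractional

theorem stmt9 (n : ℕ) (A B C D : Matrix (Fin n) (Fin n) ℂ)
    (hS : (Matrix.fromBlocks A B C D)ᵀ * J n * Matrix.fromBlocks A B C D = J n)
    (hM : (Complex.I •
      ((Matrix.fromBlocks A B C D)ᴴ * J n * Matrix.fromBlocks A B C D - J n)).PosSemidef)
    (Z : Matrix (Fin n) (Fin n) ℂ) (hZ : InSiegel Z) :
    IsUnit (C * Z + D) ∧ InSiegel (Phi A B C D Z) := by
  obtain ⟨hZsymm, hZpos⟩ := inSiegel_iff.1 hZ
  exact isUnit_and_inSiegel_mul_nonsing_inv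
    (transpose_mul_comm_of_transpose_mul_J_mul_eq hS hZsymm)
    (posDef_I_smul_conjTranspose_mul_sub_of_posSemidef hM hZpos)
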